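/- Let f ∈ G have compositional order n with linear coefficient ω, and let f* = (1/n) Σ_{j=1}^{n} ω^{n-j} f⁽ʲ⁾. For g ∈ G, one has g ∘ f ∘ g⁻¹ = ℓ_ω if and only if there exists h ∈ G of the form h(z) = Σ_{j≥0} h_{nj+1} z^{nj+1} such that g = h ∘ f*. -/

import Mathlib

open PowerSeries

/-- Composition (substitution) of formal power series: coefficient formula,
valid for `g` with zero constant term. -/
noncomputable def PS.comp {F : Type*} [CommRing F] (f g : PowerSeries F) : PowerSeries F :=
  PowerSeries.mk fun k =>
    ∑ n ∈ Finset.range (k + 1), (PowerSeries.coeff n f) * (PowerSeries.coeff k (g ^ n))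

/-- The group `G` of series with zero constant term and nonzero linear coefficient. -/
def PS.G (F : Type*) [CommRing F] : Set (PowerSeries F) :=
  {f | PowerSeries.constantCoeff f = 0 ∧ PowerSeries.coeff 1 f ≠ 0}

/-- `n`-fold compositional iterate of `f`. -/
noncomputable def PS.iter {F : Type*} [CommRing F] (f : PowerSeries F) : ℕ → PowerSeries F
  | 0 => PowerSeries.X
  | n + 1 => PS.comp f (PS.iter f n)

/-- `f` has compositional order exactly `n`. -/
def PS.HasOrder {F : Type*} [CommRing F] (f : PowerSeries F) (n : ℕ) : Prop :=
  PS.iter f n = PowerSeries.X ∧ ∀ m, 0 < m → m < n → PS.iter f m ≠ PowerSeries.X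

/-!
Averaging the iterates of `f` against powers of `ω` produces `f*` with `f* ∘ f = ℓ_ω ∘ f*` and
linear coefficient `1`, so `f` is conjugate to `ℓ_ω`; comparing `f*` with `f* ∘ f⁽ᵐ⁾ = ω ^ m f*`
shows that `ω` has multiplicative order exactly `n`. Hence `g ∘ f ∘ g⁻¹ = ℓ_ω` says precisely that
`h = g ∘ f*⁻¹` commutes with `ℓ_ω`, i.e. `h(ωz) = ω h(z)`, i.e. the coefficient of `z ^ k` in `h`
vanishes unless `ω ^ k = ω`, that is unless `k ≡ 1 mod n`.
-/

open Finset

theorem Finset.sum_range_shift_of_eq {M : Type*} [AddCancelCommMonoid M] {u : ℕ → M} {n : ℕ}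
    (h : u n = u 0) : ∑ j ∈ range n, u (j + 1) = ∑ j ∈ range n, u j :=
  add_right_cancel (b := u 0) (by rw [← sum_range_succ', sum_range_succ, h])

namespace PS

section CommRing

variable {R : Type*} [CommRing R]

theorem coeff_pow_eq_zero_of_lt {g : R⟦X⟧} (hg : constantCoeff g = 0) {k d : ℕ} (hkd : k < d) :
    coeff k (g ^ d) = 0 :=
  X_pow_dvd_iff.mp (pow_dvd_pow_of_dvd (X_dvd_iff.mpr hg) d) k hkd

theorem comp_eq_subst (f : R⟦X⟧) {g : R⟦X⟧} (hg : constantCoeff g = 0) :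
    comp f g = f.subst g := by
  ext k
  rw [coeff_subst' (HasSubst.of_constantCoeff_zero' hg),
    finsum_eq_sum_of_support_subset (s := range (k + 1))]
  · simp [comp]
  · intro d hd
    contrapose! hd
    simp [coeff_pow_eq_zero_of_lt hg (by simpa using hd)]

theorem constantCoeff_comp (f g : R⟦X⟧) : constantCoeff (comp f g) = constantCoeff f := by
  rw [← coeff_zero_eq_constantCoeff_apply, ← coeff_zero_eq_constantCoeff_apply]
  simp [comp]

theorem coeff_one_comp (f g : R⟦X⟧) : coeff 1 (comp f g) = coeff 1 f * coeff 1 g := by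
  simp [comp, sum_range_succ]

theorem comp_X (f : R⟦X⟧) : comp f X = f := by
  rw [comp_eq_subst f constantCoeff_X, X_subst]

theorem X_comp {g : R⟦X⟧} (hg : constantCoeff g = 0) : comp X g = g := by
  rw [comp_eq_subst X hg, subst_X (HasSubst.of_constantCoeff_zero' hg)]

theorem C_mul_comp (a : R) (f g : R⟦X⟧) : comp (C a * f) g = C a * comp f g := by
  ext k
  simp [comp, mul_sum, mul_assoc]

theorem comp_assoc (f : R⟦X⟧) {g h : R⟦X⟧} (hg : constantCoeff g = 0)
    (hh : constantCoeff h = 0) : comp (comp f g) h = comp f (comp g h) := by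
  rw [comp_eq_subst _ hg, comp_eq_subst _ hh, comp_eq_subst _ hh,
    comp_eq_subst _ (by rwa [← comp_eq_subst _ hh, constantCoeff_comp]),
    subst_comp_subst_apply (HasSubst.of_constantCoeff_zero' hg)
      (HasSubst.of_constantCoeff_zero' hh)]

theorem coeff_comp_C_mul_X (f : R⟦X⟧) (a : R) (k : ℕ) :
    coeff k (comp f (C a * X)) = a ^ k * coeff k f := by
  rw [comp_eq_subst f (by simp), ← smul_eq_C_mul, ← rescale_eq_subst, coeff_rescale]

theorem smul_comp (a : R) (f g : R⟦X⟧) : comp (a • f) g = a • comp f g := by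
  rw [smul_eq_C_mul, smul_eq_C_mul, C_mul_comp]

theorem sum_comp {ι : Type*} (s : Finset ι) (f : ι → R⟦X⟧) (g : R⟦X⟧) :
    comp (∑ i ∈ s, f i) g = ∑ i ∈ s, comp (f i) g := by
  ext k
  simp only [comp, coeff_mk, map_sum, sum_mul]
  exact sum_comm

theorem constantCoeff_iter {f : R⟦X⟧} (hf : constantCoeff f = 0) :
    ∀ m, constantCoeff (iter f m) = 0
  | 0 => constantCoeff_X
  | _ + 1 => by rw [iter, constantCoeff_comp, hf]

theorem coeff_one_iter (f : R⟦X⟧) : ∀ m, coeff 1 (iter f m) = coeff 1 f ^ m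
  | 0 => by simp [iter]
  | m + 1 => by rw [iter, coeff_one_comp, coeff_one_iter f m, pow_succ']

theorem iter_comp {f : R⟦X⟧} (hf : constantCoeff f = 0) :
    ∀ m, comp (iter f m) f = iter f (m + 1)
  | 0 => by rw [iter, X_comp hf, iter, iter, comp_X]
  | m + 1 => by
    rw [iter, comp_assoc f (constantCoeff_iter hf m) hf, iter_comp hf m]
    rfl

theorem comp_iter_of_comp_eq {f L : R⟦X⟧} {a : R} (hf : constantCoeff f = 0)
    (hLf : comp L f = C a * L) : ∀ m, comp L (iter f m) = C (a ^ m) * L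
  | 0 => by rw [iter, comp_X, pow_zero, map_one, one_mul]
  | m + 1 => by
    rw [iter, ← comp_assoc L hf (constantCoeff_iter hf m), hLf, C_mul_comp,
      comp_iter_of_comp_eq hf hLf m, ← mul_assoc, ← map_mul, pow_succ']

theorem comp_left_cancel {L Linv a b : R⟦X⟧} (hLinvL : comp Linv L = X)
    (hL : constantCoeff L = 0) (ha : constantCoeff a = 0) (hb : constantCoeff b = 0)
    (h : comp L a = comp L b) : a = b := by
  rw [← X_comp ha, ← X_comp hb, ← hLinvL, comp_assoc _ hL ha, comp_assoc _ hL hb, h]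

theorem comp_inv_eq_of_comp_eq {f L Linv ℓ : R⟦X⟧} (hf : constantCoeff f = 0)
    (hL : constantCoeff L = 0) (hLinv : constantCoeff Linv = 0) (hℓ : constantCoeff ℓ = 0)
    (hLLinv : comp L Linv = X) (hLinvL : comp Linv L = X) (hLf : comp L f = comp ℓ L) :
    comp Linv ℓ = comp f Linv :=
  calc comp Linv ℓ = comp (comp Linv ℓ) (comp L Linv) := by rw [hLLinv, comp_X]
    _ = comp Linv (comp (comp L f) Linv) := by
      rw [hLf, comp_assoc _ hL hLinv, comp_assoc _ hℓ (by rwa [constantCoeff_comp])]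
    _ = comp f Linv := by
      rw [comp_assoc _ hf hLinv, ← comp_assoc _ hL (by rwa [constantCoeff_comp]), hLinvL,
        X_comp (by rwa [constantCoeff_comp])]

end CommRing

section Field

variable {F : Type*} [Field F]

theorem exists_comp_inverse {g : F⟦X⟧} (hg : g ∈ G F) :
    ∃ ginv ∈ G F, comp g ginv = X ∧ comp ginv g = X := by
  obtain ⟨hg0, hg1⟩ := hg
  refine ⟨g.substInvOfIsUnit hg1.isUnit,
    ⟨constantCoeff_substInvOfIsUnit _ _, by simpa using hg1⟩, ?_, ?_⟩
  · rw [comp_eq_subst _ (constantCoeff_substInvOfIsUnit _ _), subst_substInvOfIsUnit_right _ hg0]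
  · rw [comp_eq_subst _ hg0, subst_substInvOfIsUnit_left _ hg0]

theorem iter_eq_X_iff_pow_eq_one {f L Linv : F⟦X⟧} {a : F} (hf : constantCoeff f = 0)
    (hL : L ∈ G F) (hLinvL : comp Linv L = X) (hLf : comp L f = C a * L) (m : ℕ) :
    iter f m = X ↔ a ^ m = 1 := by
  have hLm := comp_iter_of_comp_eq hf hLf m
  constructor
  · intro hm
    rw [hm, comp_X] at hLm
    have h1 := congr_arg (coeff 1) hLm
    rw [coeff_C_mul] at h1
    exact (mul_eq_right₀ hL.2).mp h1.symm
  · intro hm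
    rw [hm, map_one, one_mul] at hLm
    exact comp_left_cancel hLinvL hL.1 (constantCoeff_iter hf m) constantCoeff_X
      (hLm.trans (comp_X L).symm)

theorem comp_C_mul_X_eq_iff {h : F⟦X⟧} {a : F} {n : ℕ} (hn : 0 < n) (ha : orderOf a = n) :
    comp h (C a * X) = C a * h ↔ ∀ k, k % n ≠ 1 % n → coeff k h = 0 := by
  have hpow : ∀ k, a ^ k = a ↔ k % n = 1 % n := fun k => by
    rw [← ha, ← (orderOf_pos_iff.mp (ha ▸ hn)).pow_inj_mod, pow_one]
  simp only [PowerSeries.ext_iff, coeff_comp_C_mul_X, coeff_C_mul, mul_eq_mul_right_iff,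
    or_iff_not_imp_left]
  exact forall_congr' fun k => by rw [hpow]

-- The paper's `f*`.
noncomputable def linearizer (f : F⟦X⟧) (n : ℕ) (ω : F) : F⟦X⟧ :=
  (n : F)⁻¹ • ∑ j ∈ range n, ω ^ (n - 1 - j) • iter f (j + 1)

theorem linearizer_mem_G [CharZero F] {f : F⟦X⟧} {n : ℕ} {ω : F} (hf : constantCoeff f = 0)
    (hn : 0 < n) (hω : coeff 1 f = ω) (hωn : ω ^ n = 1) : linearizer f n ω ∈ G F := by
  have hterm : ∀ j ∈ range n, coeff 1 (ω ^ (n - 1 - j) • iter f (j + 1)) = 1 := by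
    intro j hj
    rw [coeff_smul, coeff_one_iter, hω, smul_eq_mul, ← pow_add,
      show n - 1 - j + (j + 1) = n by grind, hωn]
  refine ⟨by simp [linearizer, constantCoeff_iter hf], ?_⟩
  rw [linearizer, coeff_smul, map_sum, sum_congr rfl hterm]
  simp [hn.ne']

theorem linearizer_comp {f : F⟦X⟧} {n : ℕ} {ω : F} (hf : constantCoeff f = 0)
    (hfn : iter f n = X) (hωn : ω ^ n = 1) :
    comp (linearizer f n ω) f = C ω * linearizer f n ω := by
  set v : ℕ → F⟦X⟧ := fun j => ω ^ (n - j) • iter f (j + 1)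
  have hv : v n = v 0 := by simp [v, hωn, iter, hfn]
  calc comp (linearizer f n ω) f = (n : F)⁻¹ • ∑ j ∈ range n, v (j + 1) := by
        simp only [linearizer, smul_comp, sum_comp, iter_comp hf, v, Nat.sub_sub, add_comm 1]
    _ = (n : F)⁻¹ • ∑ j ∈ range n, v j := by rw [sum_range_shift_of_eq (u := v) hv]
    _ = C ω * linearizer f n ω := by
      have hterm : ∀ j ∈ range n, v j = ω • ω ^ (n - 1 - j) • iter f (j + 1) := fun j hj => by
        rw [smul_smul, ← pow_succ', show n - 1 - j + 1 = n - j by grind]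
      rw [sum_congr rfl hterm, ← smul_sum, smul_comm, smul_eq_C_mul, linearizer]

theorem orderOf_eq_of_hasOrder {f L : F⟦X⟧} {a : F} {n : ℕ} (hf : constantCoeff f = 0)
    (hL : L ∈ G F) (hLf : comp L f = C a * L) (hn : 0 < n) (hord : HasOrder f n) :
    orderOf a = n := by
  obtain ⟨Linv, -, -, hLinvL⟩ := exists_comp_inverse hL
  have hiter := iter_eq_X_iff_pow_eq_one hf hL hLinvL hLf
  rw [orderOf_eq_iff hn, ← hiter]
  exact ⟨hord.1, fun m hmn hm => (hiter m).not.mp (hord.2 m hm hmn)⟩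

theorem exists_conj_eq_C_mul_X_iff {f g : F⟦X⟧} {a : F} (hg : g ∈ G F) :
    (∃ ginv ∈ G F, comp g ginv = X ∧ comp ginv g = X ∧ comp (comp g f) ginv = C a * X) ↔
      comp g f = C a * g := by
  constructor
  · rintro ⟨ginv, hginv, -, hginvg, hconj⟩
    calc comp g f = comp (comp g f) (comp ginv g) := by rw [hginvg, comp_X]
      _ = comp (C a * X) g := by rw [← hconj, comp_assoc _ hginv.1 hg.1]
      _ = C a * g := by rw [C_mul_comp, X_comp hg.1]
  · intro hgf
    obtain ⟨ginv, hginv, hgginv, hginvg⟩ := exists_comp_inverse hg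
    exact ⟨ginv, hginv, hgginv, hginvg, by rw [hgf, C_mul_comp, hgginv]⟩

theorem comp_eq_C_mul_iff_exists {f L g : F⟦X⟧} {a : F} (hf : constantCoeff f = 0) (hL : L ∈ G F)
    (hLf : comp L f = C a * L) (hg : g ∈ G F) :
    comp g f = C a * g ↔ ∃ h ∈ G F, comp h (C a * X) = C a * h ∧ g = comp h L := by
  have hℓ : constantCoeff (C a * X) = 0 := by simp
  obtain ⟨Linv, hLinv, hLLinv, hLinvL⟩ := exists_comp_inverse hL
  constructor
  · intro hgf
    have hLinvℓ : comp Linv (C a * X) = comp f Linv :=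
      comp_inv_eq_of_comp_eq hf hL.1 hLinv.1 hℓ hLLinv hLinvL
        (by rw [hLf, C_mul_comp, X_comp hL.1])
    refine ⟨comp g Linv, ⟨by rw [constantCoeff_comp, hg.1], ?_⟩, ?_, ?_⟩
    · rw [coeff_one_comp]
      exact mul_ne_zero hg.2 hLinv.2
    · rw [comp_assoc _ hLinv.1 hℓ, hLinvℓ, ← comp_assoc _ hf hLinv.1, hgf, C_mul_comp]
    · rw [comp_assoc _ hLinv.1 hL.1, hLinvL, comp_X]
  · rintro ⟨h, -, hcomm, rfl⟩
    calc comp (comp h L) f = comp h (C a * L) := by rw [comp_assoc _ hL.1 hf, hLf]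
      _ = comp (comp h (C a * X)) L := by rw [comp_assoc _ hℓ hL.1, C_mul_comp, X_comp hL.1]
      _ = C a * comp h L := by rw [hcomm, C_mul_comp]

end Field

end PS

theorem stmt_9 (F : Type*) [Field F] [CharZero F] (f : PowerSeries F) (hf : f ∈ PS.G F)
    (n : ℕ) (hn : 0 < n) (hord : PS.HasOrder f n)
    (ω : F) (hω : PowerSeries.coeff 1 f = ω)
    (fstar : PowerSeries F)
    (hstar : fstar = (n : F)⁻¹ • ∑ j ∈ Finset.range n, ω ^ (n - 1 - j) • PS.iter f (j + 1))
    (g : PowerSeries F) (hg : g ∈ PS.G F) :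
    (∃ ginv ∈ PS.G F, PS.comp g ginv = PowerSeries.X ∧ PS.comp ginv g = PowerSeries.X ∧
        PS.comp (PS.comp g f) ginv = PowerSeries.C ω * PowerSeries.X) ↔
      ∃ h ∈ PS.G F, (∀ k : ℕ, k % n ≠ 1 % n → PowerSeries.coeff k h = 0) ∧
        g = PS.comp h fstar := by
  have hf0 : constantCoeff f = 0 := hf.1
  have hωn : ω ^ n = 1 := by simpa [hord.1, hω] using (PS.coeff_one_iter f n).symm
  have hL : fstar ∈ PS.G F := hstar ▸ PS.linearizer_mem_G hf0 hn hω hωn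
  have hLf : PS.comp fstar f = C ω * fstar := hstar ▸ PS.linearizer_comp hf0 hord.1 hωn
  have hωord : orderOf ω = n := PS.orderOf_eq_of_hasOrder hf0 hL hLf hn hord
  rw [PS.exists_conj_eq_C_mul_X_iff hg, PS.comp_eq_C_mul_iff_exists hf0 hL hLf hg]
  simp only [PS.comp_C_mul_X_eq_iff hn hωord]
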